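/- arXiv:1103.5277 — 3 statements merged into one kernel-verified Lean document; each statement's English description precedes it below -/
import Mathlib

section
/- For constants δ > 0, c ≠ 0, ρ > (c²/δ)^{1/4}, and θ ∈ ℝ, the function φ(x) = ρ·√(cos²(√δ·x + θ) + (c²/(δρ⁴))·sin²(√δ·x + θ)) is a solution of the second-order ODE R'' + δR - c²/R³ = 0 on ℝ. -/
open Real

/-!
Pinney's superposition principle: if `u`, `v` solve `y'' + q y = 0`, then `R = √(u² + v²)`
satisfies `R³ R'' = (u'² + v'²)(u² + v²) - (u u' + v v')² - q R⁴ = W² - q R⁴` by Lagrange's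
identity, where `W = u v' - u' v` is the Wronskian. Here `φ = √(u² + v²)` with
`u = ρ cos(√δ x + θ)` and `v = c / (√δ ρ) · sin(√δ x + θ)`, whose Wronskian is `c`.
-/

section ErmakovPinney

variable {u v u' v' : ℝ → ℝ} {x : ℝ}

theorem hasDerivAt_sqrt_sq_add_sq (hu : HasDerivAt u (u' x) x) (hv : HasDerivAt v (v' x) x)
    (hpos : u x ^ 2 + v x ^ 2 ≠ 0) :
    HasDerivAt (fun y => √(u y ^ 2 + v y ^ 2))
      ((u x * u' x + v x * v' x) / √(u x ^ 2 + v x ^ 2)) x := by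
  convert ((hu.fun_pow 2).fun_add (hv.fun_pow 2)).sqrt hpos using 1
  field_simp
  ring

theorem sqrt_sq_add_sq_ermakov_pinney (q : ℝ) (hu : ∀ y, HasDerivAt u (u' y) y)
    (hv : ∀ y, HasDerivAt v (v' y) y) (hu' : HasDerivAt u' (-q * u x) x)
    (hv' : HasDerivAt v' (-q * v x) x) (hpos : ∀ y, u y ^ 2 + v y ^ 2 ≠ 0) :
    let R := fun y => √(u y ^ 2 + v y ^ 2)
    deriv (deriv R) x + q * R x - (u x * v' x - u' x * v x) ^ 2 / R x ^ 3 = 0 := by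
  intro R
  have hR : ∀ y, HasDerivAt R ((u y * u' y + v y * v' y) / R y) y := fun y =>
    hasDerivAt_sqrt_sq_add_sq (hu y) (hv y) (hpos y)
  have hRx : R x ≠ 0 := (Real.sqrt_pos.2 ((hpos x).symm.lt_of_le (by positivity))).ne'
  have hR2 : R x ^ 2 = u x ^ 2 + v x ^ 2 := Real.sq_sqrt (by positivity)
  have hR_deriv := (((hu x).fun_mul hu').fun_add ((hv x).fun_mul hv')).fun_div (hR x) hRx
  rw [show deriv R = _ from funext fun y => (hR y).deriv, hR_deriv.deriv]
  field_simp
  linear_combination (u' x ^ 2 + v' x ^ 2 + q * R x ^ 2) * hR2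

end ErmakovPinney

theorem hasDerivAt_mul_cos_affine (a ω θ x : ℝ) :
    HasDerivAt (fun y => a * cos (ω * y + θ)) (-(a * ω) * sin (ω * x + θ)) x :=
  ((((hasDerivAt_id' x).const_mul ω).add_const θ).cos.const_mul a).congr_deriv (by ring)

theorem hasDerivAt_mul_sin_affine (a ω θ x : ℝ) :
    HasDerivAt (fun y => a * sin (ω * y + θ)) (a * ω * cos (ω * x + θ)) x :=
  ((((hasDerivAt_id' x).const_mul ω).add_const θ).sin.const_mul a).congr_deriv (by ring)

/-- The explicit function φ solves the singular oscillator R'' + δR - c²/R³ = 0. -/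
theorem stmt0 (δ c ρ θ : ℝ) (hδ : 0 < δ) (hc : c ≠ 0)
    (hρ : (c ^ 2 / δ) ^ ((1 : ℝ) / 4) < ρ)
    (φ : ℝ → ℝ)
    (hφ : ∀ x, φ x = ρ * Real.sqrt ((Real.cos (Real.sqrt δ * x + θ)) ^ 2 +
      (c ^ 2 / (δ * ρ ^ 4)) * (Real.sin (Real.sqrt δ * x + θ)) ^ 2)) :
    ∀ x : ℝ, deriv (deriv φ) x + δ * φ x - c ^ 2 / (φ x) ^ 3 = 0 := by
  set ω := √δ
  have hω : 0 < ω := Real.sqrt_pos.2 hδ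
  have hω2 : ω ^ 2 = δ := Real.sq_sqrt hδ.le
  have hρ0 : 0 < ρ := (Real.rpow_nonneg (by positivity) _).trans_lt hρ
  set u := fun y => ρ * cos (ω * y + θ)
  set v := fun y => c / (ω * ρ) * sin (ω * y + θ)
  have hφuv : φ = fun y => √(u y ^ 2 + v y ^ 2) := by
    ext y
    have hsplit : u y ^ 2 + v y ^ 2 =
        ρ ^ 2 * (cos (ω * y + θ) ^ 2 + c ^ 2 / (δ * ρ ^ 4) * sin (ω * y + θ) ^ 2) := by
      simp only [u, v]
      field_simp
      rw [hω2]
      ring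
    rw [hsplit, Real.sqrt_mul (sq_nonneg ρ), Real.sqrt_sq hρ0.le, hφ]
  have huv : ∀ y, u y ^ 2 + v y ^ 2 ≠ 0 := by
    intro y h
    obtain ⟨hu, hv⟩ := (add_eq_zero_iff_of_nonneg (sq_nonneg _) (sq_nonneg _)).1 h
    have := sin_sq_add_cos_sq (ω * y + θ)
    simp_all [u, v, hρ0.ne', hω.ne']
  intro x
  have hW :
      u x * (c / (ω * ρ) * ω * cos (ω * x + θ)) - -(ρ * ω) * sin (ω * x + θ) * v x = c := by
    simp only [u, v]
    field_simp
    linear_combination sin_sq_add_cos_sq (ω * x + θ)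
  have := sqrt_sq_add_sq_ermakov_pinney (x := x) δ (hasDerivAt_mul_cos_affine ρ ω θ)
    (hasDerivAt_mul_sin_affine (c / (ω * ρ)) ω θ)
    ((hasDerivAt_mul_sin_affine (-(ρ * ω)) ω θ x).congr_deriv (by rw [← hω2]; ring))
    ((hasDerivAt_mul_cos_affine (c / (ω * ρ) * ω) ω θ x).congr_deriv (by rw [← hω2]; ring)) huv
  rwa [hW, ← hφuv] at this
end

section
/- For the explicit solution φ(x) = ρ·√(cos²(√δ·x+θ) + (c²/(δρ⁴))·sin²(√δ·x+θ)) with δ > 0, c ≠ 0, ρ > (c²/δ)^{1/4}, the conserved energy (1/2)(φ')² + δφ²/2 + c²/(2φ²) equals V(ρ) = δρ²/2 + c²/(2ρ²) for all x. -/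
/-!
The explicit solution is `φ = √u` with `u = A cos²(ωx+θ) + B sin²(ωx+θ)`, `A = ρ²`,
`B = c²/(δρ²)`, `ω = √δ`, so that `ω² A B = c²`. Multiplying the energy by `2u` and using
`φ' = u'/(2φ)`, conservation reduces to the polynomial identity
`(u'/2)² + ω² u² + ω² A B = ω² (A + B) u` (with `sin² + cos² = 1`).
-/

open Real

/-- The solution `√(A cos²(ωx+θ) + B sin²(ωx+θ))` of the Ermakov–Pinney equation
`R'' + ω²R - ω²AB/R³ = 0`. -/
noncomputable def pinneySolution (A B ω θ : ℝ) (x : ℝ) : ℝ :=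
  √(A * cos (ω * x + θ) ^ 2 + B * sin (ω * x + θ) ^ 2)

namespace pinneySolution

variable {A B : ℝ} (ω θ x : ℝ)

lemma radicand_pos (hA : 0 < A) (hB : 0 < B) :
    0 < A * cos (ω * x + θ) ^ 2 + B * sin (ω * x + θ) ^ 2 := by
  have hpyth := sin_sq_add_cos_sq (ω * x + θ)
  have hmin := lt_min hA hB
  nlinarith [mul_le_mul_of_nonneg_right (min_le_left A B) (sq_nonneg (cos (ω * x + θ))),
    mul_le_mul_of_nonneg_right (min_le_right A B) (sq_nonneg (sin (ω * x + θ)))]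

lemma sq (hA : 0 < A) (hB : 0 < B) :
    pinneySolution A B ω θ x ^ 2 = A * cos (ω * x + θ) ^ 2 + B * sin (ω * x + θ) ^ 2 :=
  sq_sqrt (radicand_pos ω θ x hA hB).le

lemma hasDerivAt_radicand (A B : ℝ) :
    HasDerivAt (fun y => A * cos (ω * y + θ) ^ 2 + B * sin (ω * y + θ) ^ 2)
      (2 * ω * (B - A) * sin (ω * x + θ) * cos (ω * x + θ)) x := by
  have hphase : HasDerivAt (fun y => ω * y + θ) ω x := by
    simpa using ((hasDerivAt_id x).const_mul ω).add_const θ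
  refine (((hphase.cos.fun_pow 2).const_mul A).add
    ((hphase.sin.fun_pow 2).const_mul B)).congr_deriv ?_
  push_cast
  ring

lemma hasDerivAt (hA : 0 < A) (hB : 0 < B) :
    HasDerivAt (pinneySolution A B ω θ)
      (ω * (B - A) * sin (ω * x + θ) * cos (ω * x + θ) / pinneySolution A B ω θ x) x := by
  convert (hasDerivAt_radicand ω θ x A B).sqrt (radicand_pos ω θ x hA hB).ne' using 1
  · rfl
  · rw [pinneySolution]
    field_simp

theorem energy (hA : 0 < A) (hB : 0 < B) :
    (1 / 2) * deriv (pinneySolution A B ω θ) x ^ 2 + ω ^ 2 * pinneySolution A B ω θ x ^ 2 / 2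
      + ω ^ 2 * A * B / (2 * pinneySolution A B ω θ x ^ 2) = ω ^ 2 * (A + B) / 2 := by
  have hpyth := sin_sq_add_cos_sq (ω * x + θ)
  have hu := (radicand_pos ω θ x hA hB).ne'
  rw [(hasDerivAt ω θ x hA hB).deriv, div_pow, sq ω θ x hA hB]
  field_simp
  linear_combination (ω ^ 2 * ((A * cos (ω * x + θ) ^ 2 + B * sin (ω * x + θ) ^ 2) * (A + B)
    - A * B * (1 + sin (ω * x + θ) ^ 2 + cos (ω * x + θ) ^ 2))) * hpyth

end pinneySolution

/-- The conserved energy of the explicit solution φ equals V(ρ) = δρ²/2 + c²/(2ρ²). -/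
theorem stmt3 (δ c ρ θ : ℝ) (hδ : 0 < δ) (hc : c ≠ 0)
    (hρ : (c ^ 2 / δ) ^ ((1 : ℝ) / 4) < ρ)
    (φ : ℝ → ℝ)
    (hφ : ∀ x, φ x = ρ * Real.sqrt ((Real.cos (Real.sqrt δ * x + θ)) ^ 2 +
      (c ^ 2 / (δ * ρ ^ 4)) * (Real.sin (Real.sqrt δ * x + θ)) ^ 2)) :
    ∀ x : ℝ, (1 / 2) * (deriv φ x) ^ 2 + δ * (φ x) ^ 2 / 2 + c ^ 2 / (2 * (φ x) ^ 2)
      = δ * ρ ^ 2 / 2 + c ^ 2 / (2 * ρ ^ 2) := by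
  have hρ0 : 0 < ρ := (rpow_nonneg (by positivity) _).trans_lt hρ
  have hφ_eq : φ = pinneySolution (ρ ^ 2) (c ^ 2 / (δ * ρ ^ 2)) (√δ) θ := by
    funext x
    rw [hφ x, pinneySolution]
    nth_rw 1 [← sqrt_sq hρ0.le]
    rw [← sqrt_mul (sq_nonneg ρ)]
    congr 1
    field_simp
  intro x
  have hE := pinneySolution.energy (√δ) θ x (pow_pos hρ0 2)
    (by positivity : 0 < c ^ 2 / (δ * ρ ^ 2))
  rw [sq_sqrt hδ.le] at hE
  rw [hφ_eq]
  convert hE using 2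
  · field_simp
  · field_simp
end

section
/- Let δ > 0, c ≠ 0, and fix ρ > (c²/δ)^{1/4}. Define R(θ) = ρ√(cos²θ + (c²/(δρ⁴))sin²θ) and S(θ) = ρ√δ(c²/(δρ⁴) - 1)·cosθ sinθ/√(cos²θ + (c²/(δρ⁴))sin²θ). Then for every θ ∈ ℝ, the identity (1/2)S(θ)² + (δ/2)R(θ)² + c²/(2R(θ)²) = (δ/2)ρ² + c²/(2ρ²) holds. -/
/-!
Write `k = c² / (δ ρ⁴)` and `q = cos² θ + k sin² θ`, so that `R² = ρ² q`,
`S² = δ ρ² (k - 1)² cos² θ sin² θ / q` and `c² = k δ ρ⁴`. The energy then equals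
`δ ρ² / (2 q) · ((k - 1)² cos² θ sin² θ + q² + k)`, and Lagrange's identity
`(a² + k b²)² + (k - 1)² a² b² = (a² + b²)(a² + k² b²)` at `(a, b) = (cos θ, sin θ)` turns the
bracket into `q (1 + k)`, leaving `δ ρ² (1 + k) / 2 = δ ρ² / 2 + c² / (2 ρ²)`.
-/

open Real

lemma cos_sq_add_mul_sin_sq_pos {k : ℝ} (hk : 0 < k) (θ : ℝ) :
    0 < cos θ ^ 2 + k * sin θ ^ 2 := by
  rcases eq_or_ne (sin θ) 0 with hs | hs
  · simp [cos_sq', hs]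
  · positivity

lemma cos_sq_add_mul_sin_sq_sq_add (k θ : ℝ) :
    (k - 1) ^ 2 * cos θ ^ 2 * sin θ ^ 2 + (cos θ ^ 2 + k * sin θ ^ 2) ^ 2 + k
      = (cos θ ^ 2 + k * sin θ ^ 2) * (1 + k) := by
  linear_combination (cos θ ^ 2 + k ^ 2 * sin θ ^ 2 - k) * sin_sq_add_cos_sq θ

lemma energy_averaging_eq {δ c ρ k : ℝ} (hδ : 0 ≤ δ) (hρ : ρ ≠ 0) (hk : 0 < k)
    (hck : c ^ 2 = k * (δ * ρ ^ 4)) (θ : ℝ) :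
    (1 / 2) * (ρ * √δ * (k - 1) * cos θ * sin θ / √(cos θ ^ 2 + k * sin θ ^ 2)) ^ 2
      + (δ / 2) * (ρ * √(cos θ ^ 2 + k * sin θ ^ 2)) ^ 2
      + c ^ 2 / (2 * (ρ * √(cos θ ^ 2 + k * sin θ ^ 2)) ^ 2)
      = (δ / 2) * ρ ^ 2 + c ^ 2 / (2 * ρ ^ 2) := by
  have hq := cos_sq_add_mul_sin_sq_pos hk θ
  simp only [hck, div_pow, mul_pow, sq_sqrt hδ, sq_sqrt hq.le]
  field_simp
  linear_combination δ * cos_sq_add_mul_sin_sq_sq_add k θ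

/-- The averaging transformation maps circles {ρ = const} onto level sets of the
Hamiltonian: (1/2)S(θ)² + (δ/2)R(θ)² + c²/(2R(θ)²) = (δ/2)ρ² + c²/(2ρ²). -/
theorem stmt18 (δ c ρ : ℝ) (hδ : 0 < δ) (hc : c ≠ 0)
    (hρ : (c ^ 2 / δ) ^ ((1 : ℝ) / 4) < ρ)
    (R S : ℝ → ℝ)
    (hR : ∀ θ, R θ = ρ * Real.sqrt ((Real.cos θ) ^ 2 +
      (c ^ 2 / (δ * ρ ^ 4)) * (Real.sin θ) ^ 2))
    (hS : ∀ θ, S θ = ρ * Real.sqrt δ * (c ^ 2 / (δ * ρ ^ 4) - 1) * Real.cos θ * Real.sin θ /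
      Real.sqrt ((Real.cos θ) ^ 2 + (c ^ 2 / (δ * ρ ^ 4)) * (Real.sin θ) ^ 2)) :
    ∀ θ : ℝ, (1 / 2) * (S θ) ^ 2 + (δ / 2) * (R θ) ^ 2 + c ^ 2 / (2 * (R θ) ^ 2)
      = (δ / 2) * ρ ^ 2 + c ^ 2 / (2 * ρ ^ 2) := by
  intro θ
  have hρ0 : ρ ≠ 0 := (lt_trans (rpow_pos_of_pos (by positivity) _) hρ).ne'
  rw [hR, hS]
  exact energy_averaging_eq hδ.le hρ0 (by positivity) (div_mul_cancel₀ _ (by positivity)).symm θ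
end
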